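/- Assume F ⊆ H(ℵ₀)^ω is closed under f ↦ S_f, where S_f(n) = ⋃{f(k)(n) : k ≤ n, f(k) is a function, n ∈ dom(f(k)), |f(k)(n)| ≤ 2^{n+1}}. If for every f ∈ H(ℵ₀)^ω some g ∈ F agrees with f infinitely often, then for every small slalom S (|S(n)| ≤ 2^{n+1} for all n) and every sequence (X_l) of infinite subsets of ω there is a slalom T ∈ F (|T(n)| ≤ (n+1)2^{n+1}) such that for every l there are infinitely many n ∈ X_l with S(n) ⊆ T(n). -/
import Mathlib


open scoped Classical

/-- Hereditarily finite sets `H(ℵ₀)`, realized as an inductive type: a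
hereditarily finite set is coded by a list of its elements. -/
inductive HF : Type where
  | mk : List HF → HF

namespace HF

/-- The list of elements of a hereditarily finite set. -/
def elemList : HF → List HF
  | .mk l => l

/-- Set-theoretic membership on `HF`. -/
def Mem (a s : HF) : Prop := a ∈ s.elemList

/-- The set of elements of a hereditarily finite set. -/
def elems (s : HF) : Set HF := {a | Mem a s}

/-- The cardinality of a hereditarily finite set. -/
noncomputable def card (s : HF) : ℕ := s.elems.ncard

/-- Kuratowski pair. -/
def kpair (a b : HF) : HF := .mk [.mk [a], .mk [a, b]]

/-- The von Neumann natural numbers inside `HF`. -/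
def ofNat : ℕ → HF
  | 0 => .mk []
  | n + 1 => .mk ((ofNat n).elemList ++ [ofNat n])

/-- `s` codes a (set-theoretic) function: every element of `s` is an ordered
pair, and `s` is single-valued. -/
def IsFunc (s : HF) : Prop :=
  (∀ p, Mem p s → ∃ a b, p = kpair a b) ∧
  ∀ a b b', Mem (kpair a b) s → Mem (kpair a b') s → b = b'

/-- `a` belongs to the domain of (the function coded by) `s`. -/
def InDom (s a : HF) : Prop := ∃ b, Mem (kpair a b) s

/-- Application of the function coded by `s` to `a`. -/
noncomputable def app (s a : HF) : HF :=
  if h : ∃ b, Mem (kpair a b) s then h.choose else .mk []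

/-- `f k` is a function whose domain contains `n` and whose value at `n` has
at most `2^{n+1}` elements (the condition `k ∈ A_n` of the paper). -/
def goodAt (f : ℕ → HF) (k n : ℕ) : Prop :=
  IsFunc (f k) ∧ InDom (f k) (ofNat n) ∧
    (app (f k) (ofNat n)).card ≤ 2 ^ (n + 1)

/-- `S_f(n) = ⋃ { f(k)(n) : k ≤ n, f(k) a function, n ∈ dom f(k),
|f(k)(n)| ≤ 2^{n+1} }`. -/
noncomputable def Sf (f : ℕ → HF) (n : ℕ) : HF :=
  .mk (((List.range (n + 1)).map fun k =>
    if goodAt f k n then (app (f k) (ofNat n)).elemList else []).flatten)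

/-- A slalom: `|S(n)| ≤ (n+1)·2^{n+1}` for all `n`. -/
def IsSlalom (S : ℕ → HF) : Prop := ∀ n, (S n).card ≤ (n + 1) * 2 ^ (n + 1)

/-- A small slalom: `|S(n)| ≤ 2^{n+1}` for all `n`. -/
def IsSmallSlalom (S : ℕ → HF) : Prop := ∀ n, (S n).card ≤ 2 ^ (n + 1)

lemma length_ofNat (n : ℕ) : (ofNat n).elemList.length = n := by
  induction n with
  | zero => rfl
  | succ n ih =>
    show ((ofNat n).elemList ++ [ofNat n]).length = n + 1
    simp [ih]

lemma ofNat_injective : Function.Injective ofNat := by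
  intro m n h
  have := congrArg (fun s => s.elemList.length) h
  simpa [length_ofNat] using this

lemma kpair_inj {a b a' b' : HF} (h : kpair a b = kpair a' b') : a = a' ∧ b = b' := by
  simp only [kpair, HF.mk.injEq, List.cons.injEq, and_true] at h
  tauto

lemma app_eq {s a b : HF} (hs : IsFunc s) (h : Mem (kpair a b) s) : app s a = b := by
  have hex : ∃ b, Mem (kpair a b) s := ⟨b, h⟩
  have hc := hex.choose_spec
  rw [app, dif_pos hex]
  exact hs.2 a _ b hc h

lemma elems_eq (s : HF) : s.elems = ↑s.elemList.toFinset := by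
  ext a; simp [elems, Mem]

lemma card_eq (s : HF) : s.card = s.elemList.toFinset.card := by
  rw [card, elems_eq, Set.ncard_coe_finset]

lemma toFinset_flatten_card_le (L : List (List HF)) :
    L.flatten.toFinset.card ≤ (L.map fun l => l.toFinset.card).sum := by
  induction L with
  | nil => simp
  | cons a L ih =>
    simp only [List.flatten_cons, List.toFinset_append, List.map_cons, List.sum_cons]
    exact le_trans (Finset.card_union_le _ _) (by omega)

lemma Sf_isSlalom (g : ℕ → HF) : IsSlalom (Sf g) := by
  intro n
  rw [card_eq]
  have h1 : (Sf g n).elemList = (((List.range (n + 1)).map fun k =>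
      if goodAt g k n then (app (g k) (ofNat n)).elemList else []).flatten) := rfl
  rw [h1]
  refine le_trans (toFinset_flatten_card_le _) ?_
  rw [List.map_map]
  have h2 : ∀ x ∈ (List.range (n+1)).map ((fun l : List HF => l.toFinset.card) ∘
      fun k => if goodAt g k n then (app (g k) (ofNat n)).elemList else []),
      x ≤ 2 ^ (n + 1) := by
    intro x hx
    simp only [List.mem_map, Function.comp] at hx
    obtain ⟨k, -, rfl⟩ := hx
    by_cases h : goodAt g k n
    · simp only [if_pos h]
      have := h.2.2
      rwa [card_eq] at this
    · simp [h]
  refine le_trans (List.sum_le_card_nsmul _ _ h2) ?_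
  simp [mul_comm]

lemma subset_Sf {g : ℕ → HF} {k n : ℕ} (hk : k ≤ n) (hg : goodAt g k n) :
    (app (g k) (ofNat n)).elems ⊆ (Sf g n).elems := by
  intro a ha
  show a ∈ (((List.range (n + 1)).map fun k =>
    if goodAt g k n then (app (g k) (ofNat n)).elemList else []).flatten)
  rw [List.mem_flatten]
  refine ⟨(app (g k) (ofNat n)).elemList, ?_, ha⟩
  simp only [List.mem_map]
  exact ⟨k, by simp only [List.mem_range]; omega, by rw [if_pos hg]⟩

end HF

/-- If `F ⊆ H(ℵ₀)^ω` is closed under `f ↦ S_f` and every `f ∈ H(ℵ₀)^ω` agrees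
infinitely often with some member of `F`, then for every small slalom `S` and
every sequence `(X l)` of infinite subsets of ω there is a slalom `T ∈ F`
such that for every `l` there are infinitely many `n ∈ X l` with
`S(n) ⊆ T(n)`. -/
theorem slalom_big (F : Set (ℕ → HF))
    (hclosed : ∀ f ∈ F, HF.Sf f ∈ F)
    (hbig : ∀ f : ℕ → HF, ∃ g ∈ F, {n : ℕ | f n = g n}.Infinite)
    (S : ℕ → HF) (hS : HF.IsSmallSlalom S)
    (X : ℕ → Set ℕ) (hX : ∀ l, (X l).Infinite) :
    ∃ T ∈ F, HF.IsSlalom T ∧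
      ∀ l, {n ∈ X l | (S n).elems ⊆ (T n).elems}.Infinite := by
  have hgt : ∀ l k : ℕ, ∃ n ∈ X l, k < n := fun l k => (hX l).exists_gt k
  set nl : ℕ → ℕ → ℕ := fun l k => (hgt l k).choose with hnl_def
  have hnlX : ∀ l k, nl l k ∈ X l := fun l k => (hgt l k).choose_spec.1
  have hnlgt : ∀ l k, k < nl l k := fun l k => (hgt l k).choose_spec.2
  set f : ℕ → HF := fun k => HF.mk ((List.range (k + 1)).map fun l =>
    HF.kpair (HF.ofNat (nl l k)) (S (nl l k))) with hf_def
  -- membership description for f k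
  have hmem : ∀ k p, HF.Mem p (f k) ↔
      ∃ l ≤ k, p = HF.kpair (HF.ofNat (nl l k)) (S (nl l k)) := by
    intro k p
    show p ∈ (List.range (k + 1)).map (fun l =>
      HF.kpair (HF.ofNat (nl l k)) (S (nl l k))) ↔ _
    simp only [List.mem_map, List.mem_range, Nat.lt_succ_iff]
    constructor
    · rintro ⟨l, hl, rfl⟩; exact ⟨l, hl, rfl⟩
    · rintro ⟨l, hl, rfl⟩; exact ⟨l, hl, rfl⟩
  have hfunc : ∀ k, HF.IsFunc (f k) := by
    intro k
    constructor
    · intro p hp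
      obtain ⟨l, _, rfl⟩ := (hmem k p).1 hp
      exact ⟨_, _, rfl⟩
    · intro a b b' hb hb'
      obtain ⟨l, _, h1⟩ := (hmem k _).1 hb
      obtain ⟨l', _, h2⟩ := (hmem k _).1 hb'
      obtain ⟨ha1, hb1⟩ := HF.kpair_inj h1
      obtain ⟨ha2, hb2⟩ := HF.kpair_inj h2
      have : nl l k = nl l' k := HF.ofNat_injective (ha1.symm.trans ha2)
      rw [hb1, hb2, this]
  obtain ⟨g, hgF, hA⟩ := hbig f
  refine ⟨HF.Sf g, hclosed g hgF, HF.Sf_isSlalom g, ?_⟩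
  intro l
  apply Set.infinite_of_forall_exists_gt
  intro m
  obtain ⟨k, hkA, hk⟩ := hA.exists_gt (max l m)
  have hlk : l ≤ k := le_of_lt (lt_of_le_of_lt (le_max_left _ _) hk)
  have hmk : m < k := lt_of_le_of_lt (le_max_right _ _) hk
  have hfg : f k = g k := hkA
  set n := nl l k with hn_def
  have hkn : k < n := hnlgt l k
  have hmemk : HF.Mem (HF.kpair (HF.ofNat n) (S n)) (f k) :=
    (hmem k _).2 ⟨l, hlk, rfl⟩
  have happ : HF.app (f k) (HF.ofNat n) = S n := HF.app_eq (hfunc k) hmemk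
  have hgood : HF.goodAt g k n := by
    refine ⟨?_, ?_, ?_⟩
    · rw [← hfg]; exact hfunc k
    · rw [← hfg]; exact ⟨S n, hmemk⟩
    · rw [← hfg, happ]; exact hS n
  have hsub : (S n).elems ⊆ (HF.Sf g n).elems := by
    have := HF.subset_Sf (le_of_lt hkn) hgood
    rwa [← hfg, happ] at this
  exact ⟨n, ⟨hnlX l k, hsub⟩, lt_trans hmk hkn⟩
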